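/- arXiv:2011.08147 — 3 statements merged into one kernel-verified Lean document; each statement's English description precedes it below -/
import Mathlib

section
/- Let f : X → X be cwN-hyperbolic and g : Y → Y be cwM-hyperbolic homeomorphisms of compact metric spaces, with X × Y carrying the maximum metric. Then f × g is cw(NM)-hyperbolic, i.e., there is ε' > 0 such that #(C^s_{ε'}(z) ∩ C^u_{ε'}(z)) ≤ NM for every z ∈ X × Y. -/
open Metric Set

variable {X : Type*} [MetricSpace X]

/-- Two-sided iteration of a homeomorphism. -/
def zIter (f : X ≃ₜ X) (n : ℤ) (x : X) : X :=
  if 0 ≤ n then (⇑f)^[n.toNat] x else (⇑f.symm)^[(-n).toNat] x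

/-- A subcontinuum: a compact connected (nonempty) subset. -/
def IsContinuum (A : Set X) : Prop := IsCompact A ∧ IsConnected A

/-- Local stable set. -/
def Ws (f : X ≃ₜ X) (ε : ℝ) (x : X) : Set X :=
  {y | ∀ n : ℕ, dist ((⇑f)^[n] x) ((⇑f)^[n] y) ≤ ε}

/-- Local unstable set. -/
def Wu (f : X ≃ₜ X) (ε : ℝ) (x : X) : Set X :=
  {y | ∀ n : ℕ, dist ((⇑f.symm)^[n] x) ((⇑f.symm)^[n] y) ≤ ε}

/-- Local stable continuum: connected component of the local stable set. -/
def Cs (f : X ≃ₜ X) (ε : ℝ) (x : X) : Set X := connectedComponentIn (Ws f ε x) x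

/-- Local unstable continuum. -/
def Cu (f : X ≃ₜ X) (ε : ℝ) (x : X) : Set X := connectedComponentIn (Wu f ε x) x

/-- cw-expansivity with a given constant. -/
def CwExpansiveWith (f : X ≃ₜ X) (c : ℝ) : Prop :=
  0 < c ∧ ∀ C : Set X, IsContinuum C →
    (∀ n : ℤ, Metric.diam (zIter f n '' C) ≤ c) → C.Subsingleton

/-- Continuum-wise expansivity. -/
def CwExpansive (f : X ≃ₜ X) : Prop := ∃ c, CwExpansiveWith f c

/-- cw-local-product-structure. -/
def CwLPS (f : X ≃ₜ X) : Prop :=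
  ∀ ε > 0, ∃ δ > 0, ∀ x y : X, dist x y < δ → (Cu f ε x ∩ Cs f ε y).Nonempty

/-- Continuum-wise hyperbolicity. -/
def CwHyperbolic (f : X ≃ₜ X) : Prop := CwExpansive f ∧ CwLPS f

/-- cwN-expansivity. -/
def CwNExpansive (f : X ≃ₜ X) (N : ℕ) : Prop :=
  ∃ c > 0, ∀ x : X,
    (Cs f c x ∩ Cu f c x).Finite ∧ (Cs f c x ∩ Cu f c x).ncard ≤ N

/-- cwN-hyperbolicity. -/
def CwNHyperbolic (f : X ≃ₜ X) (N : ℕ) : Prop := CwHyperbolic f ∧ CwNExpansive f N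

section Aux

variable {Y : Type*} [MetricSpace Y]

lemma ws_prod (f : X ≃ₜ X) (g : Y ≃ₜ Y) (ε : ℝ) (p : X × Y) :
    Ws (f.prodCongr g) ε p = Ws f ε p.1 ×ˢ Ws g ε p.2 := by
  ext q
  simp only [Ws, mem_setOf_eq, mem_prod, Homeomorph.coe_prodCongr, Prod.map_iterate,
    Prod.dist_eq, max_le_iff, Prod.map_fst, Prod.map_snd, forall_and]

lemma wu_prod (f : X ≃ₜ X) (g : Y ≃ₜ Y) (ε : ℝ) (p : X × Y) :
    Wu (f.prodCongr g) ε p = Wu f ε p.1 ×ˢ Wu g ε p.2 := by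
  ext q
  simp only [Wu, Homeomorph.prodCongr_symm, mem_setOf_eq, mem_prod, Homeomorph.coe_prodCongr,
    Prod.map_iterate, Prod.dist_eq, max_le_iff, Prod.map_fst, Prod.map_snd, forall_and]

lemma ccIn_prod {A : Set X} {B : Set Y} (p : X × Y) :
    connectedComponentIn (A ×ˢ B) p = connectedComponentIn A p.1 ×ˢ connectedComponentIn B p.2 := by
  by_cases hp : p ∈ A ×ˢ B
  · apply subset_antisymm
    · intro q hq
      have hconn : IsPreconnected (connectedComponentIn (A ×ˢ B) p) :=
        isPreconnected_connectedComponentIn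
      have hsub : connectedComponentIn (A ×ˢ B) p ⊆ A ×ˢ B := connectedComponentIn_subset _ _
      have hp' : p ∈ connectedComponentIn (A ×ˢ B) p := mem_connectedComponentIn hp
      constructor
      · exact (hconn.image _ continuous_fst.continuousOn).subset_connectedComponentIn
          ⟨p, hp', rfl⟩ (fun z ⟨w, hw, hwz⟩ => hwz ▸ (hsub hw).1) ⟨q, hq, rfl⟩
      · exact (hconn.image _ continuous_snd.continuousOn).subset_connectedComponentIn
          ⟨p, hp', rfl⟩ (fun z ⟨w, hw, hwz⟩ => hwz ▸ (hsub hw).2) ⟨q, hq, rfl⟩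
    · exact (isPreconnected_connectedComponentIn.prod
        isPreconnected_connectedComponentIn).subset_connectedComponentIn
        ⟨mem_connectedComponentIn hp.1, mem_connectedComponentIn hp.2⟩
        (prod_mono (connectedComponentIn_subset _ _) (connectedComponentIn_subset _ _))
  · rw [connectedComponentIn_eq_empty hp]
    rcases not_and_or.mp (by simpa [Set.mem_prod] using hp) with h | h
    · rw [connectedComponentIn_eq_empty h, Set.empty_prod]
    · rw [connectedComponentIn_eq_empty h, Set.prod_empty]

lemma cs_prod (f : X ≃ₜ X) (g : Y ≃ₜ Y) (ε : ℝ) (p : X × Y) :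
    Cs (f.prodCongr g) ε p = Cs f ε p.1 ×ˢ Cs g ε p.2 := by
  rw [Cs, ws_prod, ccIn_prod]; rfl

lemma cu_prod (f : X ≃ₜ X) (g : Y ≃ₜ Y) (ε : ℝ) (p : X × Y) :
    Cu (f.prodCongr g) ε p = Cu f ε p.1 ×ˢ Cu g ε p.2 := by
  rw [Cu, wu_prod, ccIn_prod]; rfl

lemma zIter_prod (f : X ≃ₜ X) (g : Y ≃ₜ Y) (n : ℤ) (p : X × Y) :
    zIter (f.prodCongr g) n p = (zIter f n p.1, zIter g n p.2) := by
  unfold zIter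
  split <;>
    simp [Homeomorph.prodCongr_symm, Homeomorph.coe_prodCongr, Prod.map_iterate, Prod.map]

lemma ws_mono (f : X ≃ₜ X) {ε ε' : ℝ} (h : ε ≤ ε') (x : X) : Ws f ε x ⊆ Ws f ε' x :=
  fun _ hy n => (hy n).trans h

lemma wu_mono (f : X ≃ₜ X) {ε ε' : ℝ} (h : ε ≤ ε') (x : X) : Wu f ε x ⊆ Wu f ε' x :=
  fun _ hy n => (hy n).trans h

lemma ncard_prod' (A : Set X) (B : Set Y) : (A ×ˢ B).ncard = A.ncard * B.ncard := by
  rw [← Nat.card_coe_set_eq, ← Nat.card_coe_set_eq, ← Nat.card_coe_set_eq, ← Nat.card_prod]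
  exact Nat.card_congr (Equiv.Set.prod A B)

lemma diam_fst_le [CompactSpace X] [CompactSpace Y] (S : Set (X × Y)) :
    diam (Prod.fst '' S) ≤ diam S := by
  apply diam_le_of_forall_dist_le diam_nonneg
  rintro _ ⟨p, hp, rfl⟩ _ ⟨q, hq, rfl⟩
  calc dist p.1 q.1 ≤ dist p q := by rw [Prod.dist_eq]; exact le_max_left _ _
    _ ≤ diam S := dist_le_diam_of_mem (isCompact_univ.isBounded.subset (subset_univ S)) hp hq

lemma diam_snd_le [CompactSpace X] [CompactSpace Y] (S : Set (X × Y)) :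
    diam (Prod.snd '' S) ≤ diam S := by
  apply diam_le_of_forall_dist_le diam_nonneg
  rintro _ ⟨p, hp, rfl⟩ _ ⟨q, hq, rfl⟩
  calc dist p.2 q.2 ≤ dist p q := by rw [Prod.dist_eq]; exact le_max_right _ _
    _ ≤ diam S := dist_le_diam_of_mem (isCompact_univ.isBounded.subset (subset_univ S)) hp hq

end Aux

/-- The product of a cwN-hyperbolic and a cwM-hyperbolic homeomorphism is cw(NM)-hyperbolic. -/
theorem stmt5 {X Y : Type*} [MetricSpace X] [CompactSpace X] [MetricSpace Y] [CompactSpace Y]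
    (f : X ≃ₜ X) (g : Y ≃ₜ Y) (N M : ℕ)
    (hf : CwNHyperbolic f N) (hg : CwNHyperbolic g M) :
    CwNHyperbolic (f.prodCongr g) (N * M) := by
  obtain ⟨⟨⟨cfe, cfe_pos, hfe⟩, hfL⟩, cfN, cfN_pos, hfN⟩ := hf
  obtain ⟨⟨⟨cge, cge_pos, hge⟩, hgL⟩, cgN, cgN_pos, hgN⟩ := hg
  refine ⟨⟨⟨min cfe cge, lt_min cfe_pos cge_pos, ?_⟩, ?_⟩, min cfN cgN, lt_min cfN_pos cgN_pos, ?_⟩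
  · -- cw-expansivity of the product
    intro C hC hdiam
    have hX : (Prod.fst '' C).Subsingleton := by
      apply hfe _ ⟨hC.1.image continuous_fst, hC.2.image _ continuous_fst.continuousOn⟩
      intro n
      have : zIter f n '' (Prod.fst '' C) = Prod.fst '' (zIter (f.prodCongr g) n '' C) := by
        simp only [Set.image_image, zIter_prod]
      rw [this]
      exact (diam_fst_le _).trans ((hdiam n).trans (min_le_left _ _))
    have hY : (Prod.snd '' C).Subsingleton := by
      apply hge _ ⟨hC.1.image continuous_snd, hC.2.image _ continuous_snd.continuousOn⟩
      intro n
      have : zIter g n '' (Prod.snd '' C) = Prod.snd '' (zIter (f.prodCongr g) n '' C) := by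
        simp only [Set.image_image, zIter_prod]
      rw [this]
      exact (diam_snd_le _).trans ((hdiam n).trans (min_le_right _ _))
    intro p hp q hq
    exact Prod.ext (hX ⟨p, hp, rfl⟩ ⟨q, hq, rfl⟩) (hY ⟨p, hp, rfl⟩ ⟨q, hq, rfl⟩)
  · -- local product structure
    intro ε hε
    obtain ⟨δf, hδf, hLf⟩ := hfL ε hε
    obtain ⟨δg, hδg, hLg⟩ := hgL ε hε
    refine ⟨min δf δg, lt_min hδf hδg, fun p q hd => ?_⟩
    rw [cu_prod, cs_prod, Set.prod_inter_prod]
    rw [Prod.dist_eq, max_lt_iff] at hd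
    exact (hLf p.1 q.1 (hd.1.trans_le (min_le_left _ _))).prod
      (hLg p.2 q.2 (hd.2.trans_le (min_le_right _ _)))
  · -- cw(NM)-expansivity
    intro p
    have key : Cs (f.prodCongr g) (min cfN cgN) p ∩ Cu (f.prodCongr g) (min cfN cgN) p =
        (Cs f (min cfN cgN) p.1 ∩ Cu f (min cfN cgN) p.1) ×ˢ
        (Cs g (min cfN cgN) p.2 ∩ Cu g (min cfN cgN) p.2) := by
      rw [cs_prod, cu_prod, Set.prod_inter_prod]
    have hsubf : Cs f (min cfN cgN) p.1 ∩ Cu f (min cfN cgN) p.1 ⊆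
        Cs f cfN p.1 ∩ Cu f cfN p.1 :=
      inter_subset_inter
        (connectedComponentIn_mono _ (ws_mono f (min_le_left _ _) p.1))
        (connectedComponentIn_mono _ (wu_mono f (min_le_left _ _) p.1))
    have hsubg : Cs g (min cfN cgN) p.2 ∩ Cu g (min cfN cgN) p.2 ⊆
        Cs g cgN p.2 ∩ Cu g cgN p.2 :=
      inter_subset_inter
        (connectedComponentIn_mono _ (ws_mono g (min_le_right _ _) p.2))
        (connectedComponentIn_mono _ (wu_mono g (min_le_right _ _) p.2))
    constructor
    · rw [key]
      exact (((hfN p.1).1.subset hsubf).prod ((hgN p.2).1.subset hsubg))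
    · rw [key, ncard_prod']
      exact Nat.mul_le_mul
        ((ncard_le_ncard hsubf (hfN p.1).1).trans (hfN p.1).2)
        ((ncard_le_ncard hsubg (hgN p.2).1).trans (hgN p.2).2)
end

section
/- Let f : X → X be a homeomorphism that is cwN-expansive but not cw(N−1)-expansive, and g : Y → Y be cwM-expansive but not cw(M−1)-expansive, both cw-hyperbolic. Then f × g (on X × Y with the max metric) is not cw(NM−1)-expansive: for every ε > 0 there exists a point z ∈ X × Y such that C^s_ε(z) ∩ C^u_ε(z) contains at least NM distinct points. -/
open Metric Set

variable {X : Type*} [MetricSpace X]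

lemma ws_prod_s6 {X Y : Type*} [MetricSpace X] [MetricSpace Y]
    (f : X ≃ₜ X) (g : Y ≃ₜ Y) (ε : ℝ) (x : X) (y : Y) :
    Ws f ε x ×ˢ Ws g ε y ⊆ Ws (f.prodCongr g) ε (x, y) := by
  rintro ⟨a, b⟩ ⟨ha, hb⟩ n
  simp only [Homeomorph.coe_prodCongr, Prod.map_iterate, Prod.dist_eq, Prod.map_apply]
  exact max_le (ha n) (hb n)

lemma wu_prod_s6 {X Y : Type*} [MetricSpace X] [MetricSpace Y]
    (f : X ≃ₜ X) (g : Y ≃ₜ Y) (ε : ℝ) (x : X) (y : Y) :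
    Wu f ε x ×ˢ Wu g ε y ⊆ Wu (f.prodCongr g) ε (x, y) := by
  rintro ⟨a, b⟩ ⟨ha, hb⟩ n
  have h : ⇑(f.prodCongr g).symm = Prod.map f.symm g.symm := by
    rw [Homeomorph.prodCongr_symm, Homeomorph.coe_prodCongr]
  rw [h, Prod.map_iterate, Prod.dist_eq]
  exact max_le (ha n) (hb n)

lemma mem_ws_self {X : Type*} [MetricSpace X] (f : X ≃ₜ X) {ε : ℝ} (hε : 0 ≤ ε) (x : X) :
    x ∈ Ws f ε x := fun n => by rw [dist_self]; exact hε

lemma mem_wu_self {X : Type*} [MetricSpace X] (f : X ≃ₜ X) {ε : ℝ} (hε : 0 ≤ ε) (x : X) :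
    x ∈ Wu f ε x := fun n => by rw [dist_self]; exact hε

lemma cs_prod_s6 {X Y : Type*} [MetricSpace X] [MetricSpace Y]
    (f : X ≃ₜ X) (g : Y ≃ₜ Y) {ε : ℝ} (hε : 0 ≤ ε) (x : X) (y : Y) :
    Cs f ε x ×ˢ Cs g ε y ⊆ Cs (f.prodCongr g) ε (x, y) := by
  apply IsPreconnected.subset_connectedComponentIn
  · exact (isPreconnected_connectedComponentIn).prod isPreconnected_connectedComponentIn
  · exact ⟨mem_connectedComponentIn (mem_ws_self f hε x),
      mem_connectedComponentIn (mem_ws_self g hε y)⟩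
  · exact (Set.prod_mono (connectedComponentIn_subset _ _)
      (connectedComponentIn_subset _ _)).trans (ws_prod_s6 f g ε x y)

lemma cu_prod_s6 {X Y : Type*} [MetricSpace X] [MetricSpace Y]
    (f : X ≃ₜ X) (g : Y ≃ₜ Y) {ε : ℝ} (hε : 0 ≤ ε) (x : X) (y : Y) :
    Cu f ε x ×ˢ Cu g ε y ⊆ Cu (f.prodCongr g) ε (x, y) := by
  apply IsPreconnected.subset_connectedComponentIn
  · exact (isPreconnected_connectedComponentIn).prod isPreconnected_connectedComponentIn
  · exact ⟨mem_connectedComponentIn (mem_wu_self f hε x),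
      mem_connectedComponentIn (mem_wu_self g hε y)⟩
  · exact (Set.prod_mono (connectedComponentIn_subset _ _)
      (connectedComponentIn_subset _ _)).trans (wu_prod_s6 f g ε x y)

/-- If f is cwN- but not cw(N−1)-expansive and g is cwM- but not cw(M−1)-expansive
(both cw-hyperbolic), then f × g is not cw(NM−1)-expansive: for every ε > 0 some point
has at least NM distinct points in Cˢ_ε ∩ Cᵘ_ε. -/
theorem stmt6 {X Y : Type*} [MetricSpace X] [CompactSpace X] [MetricSpace Y] [CompactSpace Y]
    (f : X ≃ₜ X) (g : Y ≃ₜ Y) (N M : ℕ) (hN : 1 ≤ N) (hM : 1 ≤ M)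
    (hfh : CwHyperbolic f) (hgh : CwHyperbolic g)
    (hfN : CwNExpansive f N) (hgM : CwNExpansive g M)
    (hfnot : ∀ ε > 0, ∃ x : X, ∃ S : Finset X,
      ↑S ⊆ Cs f ε x ∩ Cu f ε x ∧ N ≤ S.card)
    (hgnot : ∀ ε > 0, ∃ y : Y, ∃ S : Finset Y,
      ↑S ⊆ Cs g ε y ∩ Cu g ε y ∧ M ≤ S.card) :
    ∀ ε > 0, ∃ z : X × Y, ∃ S : Finset (X × Y),
      ↑S ⊆ Cs (f.prodCongr g) ε z ∩ Cu (f.prodCongr g) ε z ∧ N * M ≤ S.card := by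
  intro ε hε
  obtain ⟨x, Sx, hSx, hNx⟩ := hfnot ε hε
  obtain ⟨y, Sy, hSy, hMy⟩ := hgnot ε hε
  refine ⟨(x, y), Sx ×ˢ Sy, ?_, ?_⟩
  · rintro ⟨a, b⟩ hab
    rw [Finset.coe_product] at hab
    obtain ⟨ha, hb⟩ := hab
    have ha' := hSx ha; have hb' := hSy hb
    exact ⟨cs_prod_s6 f g hε.le x y ⟨ha'.1, hb'.1⟩, cu_prod_s6 f g hε.le x y ⟨ha'.2, hb'.2⟩⟩
  · rw [Finset.card_product]
    exact Nat.mul_le_mul hNx hMy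
end

section
/- Let f be a cw-expansive homeomorphism of a compact metric space with cw-expansivity constant ε, and let ρ(C) = λ^{N(C)} with λ ∈ (0,1) as in the hyperbolic cw-metric construction. Then ρ is compatible with diameter: (a) for each δ > 0 there is γ > 0 such that diam(C) < γ implies ρ(C) < δ; (b) for each δ > 0 there is γ > 0 such that ρ(C) < γ implies diam(C) < δ. -/
/-!
(a) The finitely many maps `f^i`, `|i| < m`, are uniformly continuous, so a continuum of small
diameter has all these images of diameter `≤ ε`, which forces `N(C) ≥ m`.

(b) is Kato's uniformity argument, run in the compact hyperspace of nonempty compacta with the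
Vietoris topology. If for every `n` some continuum of diameter `≥ δ` had its images under `f^i`,
`|i| ≤ n`, of diameter `≤ ε`, the nested closed sets of such continua would have a common
element: a nondegenerate continuum all of whose iterates have diameter `≤ ε`, contradicting
cw-expansivity. Connectedness survives the limit because preconnected compacta form a closed
set of the hyperspace.
-/

open Metric Set

variable {X : Type*} [MetricSpace X]

namespace TopologicalSpace.NonemptyCompacts

variable {α : Type*} [TopologicalSpace α]

theorem isClosed_setOf_isPreconnected [T2Space α] :
    IsClosed {K : NonemptyCompacts α | IsPreconnected (K : Set α)} := by
  refine isOpen_compl_iff.1 (isOpen_iff_forall_mem_open.2 fun K hK => ?_)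
  simp only [mem_compl_iff, mem_ofPred_eq,
    isPreconnected_iff_subset_of_fully_disjoint_closed K.isCompact.isClosed] at hK
  push Not at hK
  obtain ⟨u, v, hu, hv, hKuv, huv, hKu, hKv⟩ := hK
  -- The compacta inside `U ∪ V` meeting both `U` and `V` form a neighbourhood of `K`
  -- without preconnected members.
  obtain ⟨U, V, hU, hV, hKuU, hKvV, hUV⟩ := SeparatedNhds.of_isCompact_isCompact
    (K.isCompact.inter_right hu) (K.isCompact.inter_right hv)
    (huv.mono inter_subset_right inter_subset_right)
  refine ⟨{L | ↑L ⊆ U ∪ V} ∩ {L | (↑L ∩ U).Nonempty} ∩ {L | (↑L ∩ V).Nonempty},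
    fun L ⟨⟨hLUV, hLU⟩, hLV⟩ hL => ?_,
    ((isOpen_subsets_of_isOpen (hU.union hV)).inter (isOpen_inter_nonempty_of_isOpen hU)).inter
      (isOpen_inter_nonempty_of_isOpen hV), ⟨⟨fun x hx => ?_, ?_⟩, ?_⟩⟩
  · obtain ⟨x, hxL, hxU, hxV⟩ := hL U V hU hV hLUV hLU hLV
    exact disjoint_left.1 hUV hxU hxV
  · rcases hKuv hx with h | h
    exacts [Or.inl (hKuU ⟨hx, h⟩), Or.inr (hKvV ⟨hx, h⟩)]
  · obtain ⟨x, hxK, hxv⟩ := not_subset.1 hKv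
    exact ⟨x, hxK, hKuU ⟨hxK, (hKuv hxK).resolve_right hxv⟩⟩
  · obtain ⟨x, hxK, hxu⟩ := not_subset.1 hKu
    exact ⟨x, hxK, hKvV ⟨hxK, (hKuv hxK).resolve_left hxu⟩⟩

theorem continuous_prod_self : Continuous fun K : NonemptyCompacts α => K ×ˢ K :=
  continuous_prod.comp (continuous_id.prodMk continuous_id)

theorem isClosed_setOf_forall_mem_forall_mem {P : α → α → Prop}
    (hP : IsClosed {p : α × α | P p.1 p.2}) :
    IsClosed {K : NonemptyCompacts α | ∀ x ∈ K, ∀ y ∈ K, P x y} := by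
  convert (isClosed_subsets_of_isClosed hP).preimage continuous_prod_self using 1
  ext K
  simp [Set.prod_subset_iff]

theorem isClosed_setOf_exists_mem_exists_mem {P : α → α → Prop}
    (hP : IsClosed {p : α × α | P p.1 p.2}) :
    IsClosed {K : NonemptyCompacts α | ∃ x ∈ K, ∃ y ∈ K, P x y} := by
  convert (isClosed_inter_nonempty_of_isClosed hP).preimage continuous_prod_self using 1
  ext K
  simp [Set.Nonempty, ← SetLike.mem_coe, and_assoc]

end TopologicalSpace.NonemptyCompacts

open TopologicalSpace NonemptyCompacts

theorem continuous_zIter (f : X ≃ₜ X) (n : ℤ) : Continuous (zIter f n) := by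
  unfold zIter
  split_ifs
  exacts [f.continuous.iterate _, f.symm.continuous.iterate _]

theorem exists_pos_forall_diam_zIter_image_le [CompactSpace X] (f : X ≃ₜ X) {ε : ℝ}
    (hε : 0 < ε) (m : ℕ) :
    ∃ γ > 0, ∀ C : Set X, diam C < γ → ∀ i : ℤ, i.natAbs < m → diam (zIter f i '' C) ≤ ε := by
  have hclose : ∀ᶠ p in uniformity X,
      ∀ i ∈ Finset.Ioo (-m : ℤ) m, dist (zIter f i p.1) (zIter f i p.2) < ε :=
    (Filter.eventually_all_finset _).2 fun i _ =>
      CompactSpace.uniformContinuous_of_continuous (continuous_zIter f i) (dist_mem_uniformity hε)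
  obtain ⟨γ, hγ, hγε⟩ := mem_uniformity_dist.1 hclose
  refine ⟨γ, hγ, fun C hC i hi => diam_le_of_forall_dist_le hε.le ?_⟩
  rintro _ ⟨x, hx, rfl⟩ _ ⟨y, hy, rfl⟩
  refine (hγε ((dist_le_diam_of_mem isBounded_of_compactSpace hx hy).trans_lt hC) i ?_).le
  rw [Finset.mem_Ioo]
  omega

theorem exists_half_le_dist_of_le_diam {s : Set X} {δ : ℝ} (hδ : 0 < δ) (hs : δ ≤ diam s) :
    ∃ x ∈ s, ∃ y ∈ s, δ / 2 ≤ dist x y := by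
  by_contra! h
  have := diam_le_of_forall_dist_le (by positivity) fun x hx y hy => (h x hx y hy).le
  linarith

theorem CwExpansiveWith.exists_diam_lt [CompactSpace X] {f : X ≃ₜ X} {ε : ℝ}
    (hf : CwExpansiveWith f ε) {δ : ℝ} (hδ : 0 < δ) :
    ∃ n : ℕ, ∀ C : Set X, IsContinuum C →
      (∀ i : ℤ, i.natAbs ≤ n → diam (zIter f i '' C) ≤ ε) → diam C < δ := by
  by_contra! hbig
  let T (n : ℕ) : Set (NonemptyCompacts X) :=
    {K | IsPreconnected (K : Set X) ∧ ∃ x ∈ K, ∃ y ∈ K, δ / 2 ≤ dist x y} ∩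
      {K | ∀ x ∈ K, ∀ y ∈ K, ∀ i : ℤ, i.natAbs ≤ n → dist (zIter f i x) (zIter f i y) ≤ ε}
  have hT_closed (n : ℕ) : IsClosed (T n) := by
    refine (isClosed_setOf_isPreconnected.inter
      (isClosed_setOf_exists_mem_exists_mem (P := (δ / 2 ≤ dist · ·))
        (isClosed_le continuous_const continuous_dist))).inter
      (isClosed_setOf_forall_mem_forall_mem ?_)
    simp only [ofPred_forall]
    exact isClosed_iInter fun i => isClosed_iInter fun _ => isClosed_le
      (((continuous_zIter f i).comp continuous_fst).dist
        ((continuous_zIter f i).comp continuous_snd)) continuous_const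
  have hT_anti (n : ℕ) : T (n + 1) ⊆ T n := fun K ⟨hK, hsmall⟩ =>
    ⟨hK, fun x hx y hy i hi => hsmall x hx y hy i (by omega)⟩
  have hT_nonempty (n : ℕ) : (T n).Nonempty := by
    obtain ⟨C, hC, hsmall, hCδ⟩ := hbig n
    refine ⟨⟨⟨C, hC.1⟩, hC.2.nonempty⟩, ⟨hC.2.isPreconnected,
      exists_half_le_dist_of_le_diam hδ hCδ⟩, fun x hx y hy i hi => ?_⟩
    exact (dist_le_diam_of_mem isBounded_of_compactSpace (mem_image_of_mem _ hx)
      (mem_image_of_mem _ hy)).trans (hsmall i hi)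
  obtain ⟨K, hK⟩ := IsCompact.nonempty_iInter_of_sequence_nonempty_isCompact_isClosed T hT_anti
    hT_nonempty (hT_closed 0).isCompact hT_closed
  rw [mem_iInter] at hK
  obtain ⟨⟨hKconn, x, hx, y, hy, hxy⟩, -⟩ := hK 0
  have hKsub : (K : Set X).Subsingleton := by
    refine hf.2 K ⟨K.isCompact, K.nonempty, hKconn⟩ fun i => diam_le_of_forall_dist_le hf.1.le ?_
    rintro _ ⟨x, hx, rfl⟩ _ ⟨y, hy, rfl⟩
    exact (hK i.natAbs).2 x hx y hy i le_rfl
  rw [hKsub hx hy, dist_self] at hxy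
  linarith

/-- Compatibility between ρ = λ^{N(·)} and the diameter. -/
theorem stmt13 {X : Type*} [MetricSpace X] [CompactSpace X]
    (f : X ≃ₜ X) (ε : ℝ) (hf : CwExpansiveWith f ε)
    (lam : ℝ) (hlam0 : 0 < lam) (hlam1 : lam < 1)
    (N : Set X → ℕ)
    (hN : ∀ C : Set X, IsContinuum C → ¬C.Subsingleton →
      (∃ n : ℤ, n.natAbs = N C ∧ ε < Metric.diam (zIter f n '' C)) ∧
      (∀ n : ℤ, n.natAbs < N C → Metric.diam (zIter f n '' C) ≤ ε))
    (ρ : Set X → ℝ)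
    (hρ : ∀ C : Set X, IsContinuum C →
      (¬C.Subsingleton → ρ C = lam ^ N C) ∧ (C.Subsingleton → ρ C = 0)) :
    (∀ δ > (0 : ℝ), ∃ γ > (0 : ℝ), ∀ C : Set X, IsContinuum C →
      Metric.diam C < γ → ρ C < δ) ∧
    (∀ δ > (0 : ℝ), ∃ γ > (0 : ℝ), ∀ C : Set X, IsContinuum C →
      ρ C < γ → Metric.diam C < δ) := by
  refine ⟨fun δ hδ => ?_, fun δ hδ => ?_⟩
  · obtain ⟨m, hm⟩ := exists_pow_lt_of_lt_one hδ hlam1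
    obtain ⟨γ, hγ, hsmall⟩ := exists_pos_forall_diam_zIter_image_le f hf.1 m
    refine ⟨γ, hγ, fun C hC hCγ => ?_⟩
    by_cases hss : C.Subsingleton
    · rwa [(hρ C hC).2 hss]
    obtain ⟨n, hnN, hn⟩ := (hN C hC hss).1
    have hmN : m ≤ N C := by
      by_contra! h
      exact (hsmall C hCγ n (hnN ▸ h)).not_gt hn
    rw [(hρ C hC).1 hss]
    exact (pow_le_pow_of_le_one hlam0.le hlam1.le hmN).trans_lt hm
  · obtain ⟨n, hn⟩ := hf.exists_diam_lt hδ
    refine ⟨lam ^ n, pow_pos hlam0 n, fun C hC hρC => ?_⟩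
    by_cases hss : C.Subsingleton
    · rwa [diam_subsingleton hss]
    rw [(hρ C hC).1 hss, pow_lt_pow_iff_right_of_lt_one₀ hlam0 hlam1] at hρC
    exact hn C hC fun i hi => (hN C hC hss).2 i (hi.trans_lt hρC)
end
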